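/- Let (X,E) be transitive and let G ⊆ X × Y. Then size(G) = size(hull(G)). -/

import Mathlib

open Set

/-- Two points of `X × Y` are disparate: they are distinct, and if their second
coordinates agree then their first coordinates are not adjacent in `G`. -/
def Disparate {X Y : Type*} (G : SimpleGraph X) (a b : X × Y) : Prop :=
  a ≠ b ∧ (a.2 = b.2 → ¬ G.Adj a.1 b.1)

/-- A set `A ⊆ X × Y` is disparate if any two distinct points of `A` are disparate. -/
def DisparateSet {X Y : Type*} (G : SimpleGraph X) (A : Set (X × Y)) : Prop :=
  ∀ a ∈ A, ∀ b ∈ A, a ≠ b → Disparate G a b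

/-- The hull of `A`: all points that fail to be disparate from some point of `A`. -/
def dispHull {X Y : Type*} (G : SimpleGraph X) (A : Set (X × Y)) : Set (X × Y) :=
  {a | ∃ a' ∈ A, ¬ Disparate G a a'}

/-- The complement of `A`: all points disparate from every point of `A`. -/
def dispCompl {X Y : Type*} (G : SimpleGraph X) (A : Set (X × Y)) : Set (X × Y) :=
  {a | ∀ a' ∈ A, Disparate G a a'}

/-- The graph of the restriction of a set-valued mapping `F` to `V`. -/
def svGraphOn {X Y : Type*} (F : X → Set Y) (V : Set X) : Set (X × Y) :=
  {p | p.1 ∈ V ∧ p.2 ∈ F p.1}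

/-- The graph of the complement mapping `F_{W,Z}`, namely
`G(F|_{X∖W}) ∩ compl(Z)`. -/
def complMapGraph {X Y : Type*} (G : SimpleGraph X) (F : X → Set Y) (W : Set X)
    (Z : Set (X × Y)) : Set (X × Y) :=
  svGraphOn F Wᶜ ∩ dispCompl G Z

/-- The graph `{(x, s x) : x ∈ V}` of the restriction of a point-valued map `s` to `V`. -/
def selGraphOn {X Y : Type*} (s : X → Y) (V : Set X) : Set (X × Y) :=
  {p | p.1 ∈ V ∧ p.2 = s p.1}

/-- `size(S)`: the maximum cardinality of a disparate subset of `S`. -/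
noncomputable def dispSize {X Y : Type*} (G : SimpleGraph X) (S : Set (X × Y)) : ℕ :=
  sSup {n | ∃ A ⊆ S, DisparateSet G A ∧ A.ncard = n}

/-- The graph `(X, E)` is transitive. -/
def GraphTransitive {X : Type*} (G : SimpleGraph X) : Prop :=
  ∀ ⦃x x' x'' : X⦄, G.Adj x x' → G.Adj x' x'' → x ≠ x'' → G.Adj x x''

/-!
On a transitive graph, "not disparate" (same `Y`-coordinate and equal or adjacent
`X`-coordinates) is an equivalence relation, and disparateness only depends on the classes.
A disparate subset of `hull(S)` meets each class at most once, and every class meeting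
`hull(S)` meets `S`; choosing a point of `S` in the class of each point gives a disparate
subset of `S` of the same cardinality. Hence both sides are suprema of the same set of numbers.
-/

theorem subset_dispHull {X Y : Type*} (G : SimpleGraph X) (S : Set (X × Y)) :
    S ⊆ dispHull G S :=
  fun a ha => ⟨a, ha, fun h => h.1 rfl⟩

theorem not_disparate_iff {X Y : Type*} (G : SimpleGraph X) (a b : X × Y) :
    ¬ Disparate G a b ↔ a.2 = b.2 ∧ Relation.ReflGen G.Adj a.1 b.1 := by
  rw [Relation.reflGen_iff, Disparate]
  grind [Prod.ext_iff]

namespace GraphTransitive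

variable {X Y : Type*} {G : SimpleGraph X}

theorem reflGen_adj_trans (hG : GraphTransitive G) {x y z : X}
    (hxy : Relation.ReflGen G.Adj x y) (hyz : Relation.ReflGen G.Adj y z) :
    Relation.ReflGen G.Adj x z := by
  rcases hxy with _ | hxy
  · exact hyz
  rcases hyz with _ | hyz
  · exact .single hxy
  by_cases hxz : x = z
  · exact hxz ▸ .refl
  · exact .single (hG hxy hyz hxz)

theorem equivalence_not_disparate (hG : GraphTransitive G) :
    Equivalence (fun a b : X × Y => ¬ Disparate G a b) := by
  simp only [not_disparate_iff]
  refine ⟨fun _ => ⟨rfl, .refl⟩, fun ⟨h2, h1⟩ => ⟨h2.symm, ?_⟩,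
    fun ⟨h2, h1⟩ ⟨h2', h1'⟩ => ⟨h2.trans h2', hG.reflGen_adj_trans h1 h1'⟩⟩
  rw [Relation.reflGen_iff] at h1 ⊢
  exact h1.imp Eq.symm SimpleGraph.Adj.symm

theorem disparate_of_not_disparate (hG : GraphTransitive G) {a b a' b' : X × Y}
    (hab : Disparate G a b) (ha : ¬ Disparate G a a') (hb : ¬ Disparate G b b') :
    Disparate G a' b' := by
  have e := hG.equivalence_not_disparate (Y := Y)
  by_contra h
  exact e.trans (e.trans ha h) (e.symm hb) hab

theorem disparateSet_image (hG : GraphTransitive G) {A : Set (X × Y)} {f : X × Y → X × Y}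
    (hA : DisparateSet G A) (hf : ∀ a ∈ A, ¬ Disparate G a (f a)) :
    DisparateSet G (f '' A) := by
  rintro _ ⟨a, ha, rfl⟩ _ ⟨b, hb, rfl⟩ hfab
  exact hG.disparate_of_not_disparate (hA a ha b hb (fun h => hfab (congrArg f h)))
    (hf a ha) (hf b hb)

theorem injOn_of_disparateSet (hG : GraphTransitive G) {A : Set (X × Y)}
    {f : X × Y → X × Y} (hA : DisparateSet G A) (hf : ∀ a ∈ A, ¬ Disparate G a (f a)) :
    InjOn f A := by
  intro a ha b hb hfab
  by_contra hab
  exact (hG.disparate_of_not_disparate (hA a ha b hb hab) (hf a ha) (hf b hb)).1 hfab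

theorem exists_disparateSet_ncard_eq_of_subset_dispHull (hG : GraphTransitive G)
    {S A : Set (X × Y)} (hAS : A ⊆ dispHull G S) (hA : DisparateSet G A) :
    ∃ B ⊆ S, DisparateSet G B ∧ B.ncard = A.ncard := by
  choose! f hfS hf using hAS
  exact ⟨f '' A, image_subset_iff.2 hfS, hG.disparateSet_image hA hf,
    (hG.injOn_of_disparateSet hA hf).ncard_image⟩

end GraphTransitive

theorem size_hull_eq_general {X Y : Type*}
    (G : SimpleGraph X) (hG : GraphTransitive G) (S : Set (X × Y)) :
    dispSize G S = dispSize G (dispHull G S) := by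
  unfold dispSize
  congr 1
  ext n
  constructor
  · rintro ⟨A, hAS, hA, rfl⟩
    exact ⟨A, hAS.trans (subset_dispHull G S), hA, rfl⟩
  · rintro ⟨A, hAS, hA, rfl⟩
    exact hG.exists_disparateSet_ncard_eq_of_subset_dispHull hAS hA

/-- On a transitive graph, a set and its hull have the same size. -/
theorem size_hull_eq {X Y : Type*} [Fintype X] [Fintype Y]
    (G : SimpleGraph X) (hG : GraphTransitive G) (S : Set (X × Y)) :
    dispSize G S = dispSize G (dispHull G S) :=
  size_hull_eq_general G hG S
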